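/- arXiv:2402.13595 — 6 statements merged into one kernel-verified Lean document; each statement's English description precedes it below -/
import Mathlib

section
/- The k-means problem formulated over binary assignment matrices is equivalent to its convex relaxation: the minimum of G over the relaxed set Ā is attained, there exists a minimizer Γ* of G over Ā which lies in the binary set A, and min_{Γ∈Ā} G(Γ) = min_{Γ∈A} G(Γ). -/
/-!
For fixed centres `μ`, the cost `∑ᵢⱼ Γᵢⱼ ‖xᵢ - μⱼ‖²` is linear in `Γ`; by the parallel axis
identity it dominates `G(Γ)` whenever `Γ` has row sums `1`, with equality when `μ` consists of the
centroids of `Γ`. Hence it suffices to show that every linear cost is minimised over `Ā` at a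
point of `A`. Rescaling each column of `Γ ∈ Ā` to sum `1` and spreading the mass lost by each
row evenly over `n - k` dummy columns gives a doubly stochastic matrix. By Birkhoff's theorem
some permutation matrix costs no more, a dummy column being charged the cost of the cheapest
cluster of its row; that permutation sends each point to a cluster and hits every cluster.
-/

open Finset

noncomputable section

/-- The set of binary assignment matrices: entries in `{0,1}`, row sums equal to `1`,
column sums at least `1`. -/
def kmeansA (n k : ℕ) : Set (Matrix (Fin n) (Fin k) ℝ) :=
  {Γ | (∀ i j, Γ i j = 0 ∨ Γ i j = 1) ∧ (∀ i, ∑ j, Γ i j = 1) ∧ (∀ j, 1 ≤ ∑ i, Γ i j)}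

/-- The convex relaxation: entries in `[0,1]`, row sums equal to `1`, column sums at least `1`. -/
def kmeansAbar (n k : ℕ) : Set (Matrix (Fin n) (Fin k) ℝ) :=
  {Γ | (∀ i j, 0 ≤ Γ i j ∧ Γ i j ≤ 1) ∧ (∀ i, ∑ j, Γ i j = 1) ∧ (∀ j, 1 ≤ ∑ i, Γ i j)}

/-- The concave assignment objective
`G(Γ) = c₀ − Σⱼ ‖Σᵢ Γᵢⱼ xᵢ‖² / (Σᵢ Γᵢⱼ)` with `c₀ = Σᵢ ‖xᵢ‖²`. -/
def kmeansG {n k d : ℕ} (x : Fin n → EuclideanSpace ℝ (Fin d))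
    (Γ : Matrix (Fin n) (Fin k) ℝ) : ℝ :=
  (∑ i, ‖x i‖ ^ 2) - ∑ j, ‖∑ i, Γ i j • x i‖ ^ 2 / (∑ i, Γ i j)

section AssignmentCost

variable {ι κ : Type*} [Fintype ι] [Fintype κ]

def assignmentCost (c : Matrix ι κ ℝ) : Matrix ι κ ℝ →ₗ[ℝ] ℝ where
  toFun Γ := ∑ i, ∑ j, Γ i j * c i j
  map_add' Γ Δ := by simp only [Matrix.add_apply, add_mul, sum_add_distrib]
  map_smul' a Γ := by
    simp only [Matrix.smul_apply, smul_eq_mul, mul_sum, mul_assoc, RingHom.id_apply]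

lemma assignmentCost_apply (c Γ : Matrix ι κ ℝ) :
    assignmentCost c Γ = ∑ i, ∑ j, Γ i j * c i j := rfl

lemma assignmentCost_permMatrix [DecidableEq ι] (C : Matrix ι ι ℝ) (σ : Equiv.Perm ι) :
    assignmentCost C (σ.permMatrix ℝ) = ∑ i, C i (σ i) := by
  simp [assignmentCost_apply, Equiv.toPEquiv_apply]

lemma exists_perm_assignmentCost_le [DecidableEq ι] (C : Matrix ι ι ℝ) {M : Matrix ι ι ℝ}
    (hM : M ∈ doublyStochastic ℝ ι) :
    ∃ σ : Equiv.Perm ι, assignmentCost C (σ.permMatrix ℝ) ≤ assignmentCost C M := by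
  rw [← SetLike.mem_coe, doublyStochastic_eq_convexHull_permMatrix] at hM
  obtain ⟨-, ⟨σ, rfl⟩, hσ⟩ :=
    ((assignmentCost C).concaveOn convex_univ).exists_le_of_mem_convexHull (Set.subset_univ _) hM
  exact ⟨σ, hσ⟩

variable [DecidableEq κ]

def assignmentMatrix (g : ι → κ) : Matrix ι κ ℝ :=
  Matrix.of fun i j => if g i = j then 1 else 0

lemma assignmentCost_assignmentMatrix (c : Matrix ι κ ℝ) (g : ι → κ) :
    assignmentCost c (assignmentMatrix g) = ∑ i, c i (g i) := by
  simp [assignmentCost_apply, assignmentMatrix]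

end AssignmentCost

lemma assignmentMatrix_mem_kmeansA {n k : ℕ} {g : Fin n → Fin k} (hg : Function.Surjective g) :
    assignmentMatrix g ∈ kmeansA n k := by
  refine ⟨fun i j => ?_, fun i => by simp [assignmentMatrix], fun j => ?_⟩
  · simp only [assignmentMatrix, Matrix.of_apply]
    split_ifs <;> simp
  · obtain ⟨i, rfl⟩ := hg j
    calc (1 : ℝ) = assignmentMatrix g i (g i) := by simp [assignmentMatrix]
      _ ≤ ∑ i', assignmentMatrix g i' (g i) :=
        single_le_sum (f := fun i' => assignmentMatrix g i' (g i))
          (fun i' _ => by simp only [assignmentMatrix, Matrix.of_apply]; split_ifs <;> simp)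
          (mem_univ i)

section Padding

variable {n k m : ℕ} {Γ : Matrix (Fin n) (Fin k) ℝ}

lemma le_of_mem_kmeansAbar (hΓ : Γ ∈ kmeansAbar n k) : k ≤ n := by
  obtain ⟨-, hrow, hcol⟩ := hΓ
  have : (k : ℝ) ≤ n :=
    calc (k : ℝ) = ∑ _j : Fin k, (1 : ℝ) := by simp
      _ ≤ ∑ j, ∑ i, Γ i j := sum_le_sum fun j _ => hcol j
      _ = n := by rw [sum_comm]; simp [hrow]
  exact_mod_cast this

def paddingMass (Γ : Matrix (Fin n) (Fin k) ℝ) (i : Fin n) : ℝ :=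
  1 - ∑ j, Γ i j / ∑ l, Γ l j

lemma paddingMass_nonneg (hΓ : Γ ∈ kmeansAbar n k) (i : Fin n) : 0 ≤ paddingMass Γ i := by
  obtain ⟨h01, hrow, hcol⟩ := hΓ
  have : ∑ j, Γ i j / ∑ l, Γ l j ≤ ∑ j, Γ i j :=
    sum_le_sum fun j _ => div_le_self (h01 i j).1 (hcol j)
  rw [paddingMass, sub_nonneg, ← hrow i]
  exact this

lemma sum_paddingMass (hΓ : Γ ∈ kmeansAbar n k) : ∑ i, paddingMass Γ i = n - k := by
  have hpos : ∀ j, ∑ l, Γ l j ≠ 0 := fun j => (one_pos.trans_le (hΓ.2.2 j)).ne'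
  simp only [paddingMass]
  rw [sum_sub_distrib, sum_comm]
  simp [← sum_div, div_self (hpos _)]

lemma natCast_eq_sub_of_equiv (e : Fin n ≃ Fin k ⊕ Fin m) : (m : ℝ) = n - k := by
  have hcard : n = k + m := by simpa using Fintype.card_congr e
  rw [hcard, Nat.cast_add, add_sub_cancel_left]

lemma sum_paddingMass_div (hΓ : Γ ∈ kmeansAbar n k) (e : Fin n ≃ Fin k ⊕ Fin m) (i : Fin n) :
    ∑ _t : Fin m, paddingMass Γ i / m = paddingMass Γ i := by
  rcases m.eq_zero_or_pos with rfl | hm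
  · -- without dummy columns `n = k`, so the nonnegative masses sum to `0`
    have hnk := natCast_eq_sub_of_equiv e
    rw [Nat.cast_zero, ← sum_paddingMass hΓ, eq_comm,
      sum_eq_zero_iff_of_nonneg fun i _ => paddingMass_nonneg hΓ i] at hnk
    simp [hnk i (mem_univ i)]
  · rw [sum_const, card_univ, Fintype.card_fin, nsmul_eq_mul]
    field_simp

def doublyStochasticPadding (e : Fin n ≃ Fin k ⊕ Fin m) (Γ : Matrix (Fin n) (Fin k) ℝ) :
    Matrix (Fin n) (Fin n) ℝ :=
  fun i i' => Sum.elim (fun j => Γ i j / ∑ l, Γ l j) (fun _ => paddingMass Γ i / m) (e i')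

lemma doublyStochasticPadding_mem (hΓ : Γ ∈ kmeansAbar n k) (e : Fin n ≃ Fin k ⊕ Fin m) :
    doublyStochasticPadding e Γ ∈ doublyStochastic ℝ (Fin n) := by
  have hpos : ∀ j, 0 < ∑ l, Γ l j := fun j => one_pos.trans_le (hΓ.2.2 j)
  refine mem_doublyStochastic_iff_sum.mpr ⟨fun i i' => ?_, fun i => ?_, fun i' => ?_⟩
  · simp only [doublyStochasticPadding]
    rcases e i' with j | t
    · exact div_nonneg (hΓ.1 i j).1 (hpos j).le
    · exact div_nonneg (paddingMass_nonneg hΓ i) m.cast_nonneg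
  · rw [← e.symm.sum_comp, Fintype.sum_sum_type]
    simp only [doublyStochasticPadding, Equiv.apply_symm_apply, Sum.elim_inl, Sum.elim_inr]
    rw [sum_paddingMass_div hΓ e, paddingMass]
    ring
  · obtain ⟨j | t, rfl⟩ := e.symm.surjective i'
    · simp only [doublyStochasticPadding, Equiv.apply_symm_apply, Sum.elim_inl]
      rw [← sum_div, div_self (hpos j).ne']
    · simp only [doublyStochasticPadding, Equiv.apply_symm_apply, Sum.elim_inr]
      rw [← sum_div, sum_paddingMass hΓ, ← natCast_eq_sub_of_equiv e,
        div_self (Nat.cast_ne_zero.mpr (Fin.pos t).ne')]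

lemma assignmentCost_doublyStochasticPadding_le (hΓ : Γ ∈ kmeansAbar n k)
    (e : Fin n ≃ Fin k ⊕ Fin m) (c : Matrix (Fin n) (Fin k) ℝ) {f : Fin n → Fin k}
    (hf : ∀ i j, c i (f i) ≤ c i j) :
    assignmentCost (Matrix.of fun i i' => c i (Sum.elim id (fun _ => f i) (e i')))
      (doublyStochasticPadding e Γ) ≤ assignmentCost c Γ := by
  simp only [assignmentCost_apply, Matrix.of_apply]
  refine sum_le_sum fun i _ => ?_
  set s : Fin k → ℝ := fun j => ∑ l, Γ l j
  have hexcess : ∀ j, 0 ≤ Γ i j - Γ i j / s j := fun j =>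
    sub_nonneg.mpr (div_le_self (hΓ.1 i j).1 (hΓ.2.2 j))
  calc ∑ i', doublyStochasticPadding e Γ i i' * c i (Sum.elim id (fun _ => f i) (e i'))
      = ∑ j, Γ i j / s j * c i j + paddingMass Γ i * c i (f i) := by
        rw [← e.symm.sum_comp, Fintype.sum_sum_type]
        simp only [doublyStochasticPadding, Equiv.apply_symm_apply, Sum.elim_inl, Sum.elim_inr,
          id, ← sum_mul, sum_paddingMass_div hΓ e, s]
    _ = ∑ j, (Γ i j / s j * c i j + (Γ i j - Γ i j / s j) * c i (f i)) := by
        rw [sum_add_distrib, ← sum_mul, sum_sub_distrib, hΓ.2.1 i, paddingMass]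
    _ ≤ ∑ j, (Γ i j / s j * c i j + (Γ i j - Γ i j / s j) * c i j) := by
        gcongr with j
        exacts [hexcess j, hf i j]
    _ = ∑ j, Γ i j * c i j := sum_congr rfl fun j _ => by ring

end Padding

theorem exists_mem_kmeansA_assignmentCost_le {n k : ℕ} (c : Matrix (Fin n) (Fin k) ℝ)
    {Γ : Matrix (Fin n) (Fin k) ℝ} (hΓ : Γ ∈ kmeansAbar n k) :
    ∃ Γ' ∈ kmeansA n k, assignmentCost c Γ' ≤ assignmentCost c Γ := by
  let e : Fin n ≃ Fin k ⊕ Fin (n - k) :=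
    (finCongr (Nat.add_sub_cancel' (le_of_mem_kmeansAbar hΓ)).symm).trans finSumFinEquiv.symm
  have hmin : ∀ i, ∃ j, ∀ j', c i j ≤ c i j' := fun i => by
    obtain ⟨j, -, -⟩ := exists_ne_zero_of_sum_ne_zero ((hΓ.2.1 i).symm ▸ one_ne_zero)
    have : Nonempty (Fin k) := ⟨j⟩
    exact Finite.exists_min (c i)
  choose f hf using hmin
  let π : Fin n → Fin n → Fin k := fun i i' => Sum.elim id (fun _ => f i) (e i')
  obtain ⟨σ, hσ⟩ := exists_perm_assignmentCost_le (Matrix.of fun i i' => c i (π i i'))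
    (doublyStochasticPadding_mem hΓ e)
  have hsurj : Function.Surjective fun i => π i (σ i) := fun j =>
    ⟨σ.symm (e.symm (.inl j)), by simp [π]⟩
  refine ⟨assignmentMatrix fun i => π i (σ i), assignmentMatrix_mem_kmeansA hsurj, ?_⟩
  calc assignmentCost c (assignmentMatrix fun i => π i (σ i))
      = assignmentCost (Matrix.of fun i i' => c i (π i i')) (σ.permMatrix ℝ) := by
        rw [assignmentCost_assignmentMatrix, assignmentCost_permMatrix]
        rfl
    _ ≤ assignmentCost (Matrix.of fun i i' => c i (π i i')) (doublyStochasticPadding e Γ) := hσ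
    _ ≤ assignmentCost c Γ := assignmentCost_doublyStochasticPadding_le hΓ e c hf

section ParallelAxis

variable {ι E : Type*} [Fintype ι] [NormedAddCommGroup E] [InnerProductSpace ℝ E]

theorem sum_mul_norm_sub_sq_eq (w : ι → ℝ) (x : ι → E) (hw : ∑ i, w i ≠ 0) (μ : E) :
    ∑ i, w i * ‖x i - μ‖ ^ 2 =
      ∑ i, w i * ‖x i‖ ^ 2 - ‖∑ i, w i • x i‖ ^ 2 / ∑ i, w i +
        (∑ i, w i) * ‖μ - (∑ i, w i)⁻¹ • ∑ i, w i • x i‖ ^ 2 := by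
  have hexpand : ∑ i, w i * ‖x i - μ‖ ^ 2 =
      ∑ i, w i * ‖x i‖ ^ 2 - 2 * inner ℝ (∑ i, w i • x i) μ + (∑ i, w i) * ‖μ‖ ^ 2 := by
    rw [sum_inner, mul_sum, sum_mul, ← sum_sub_distrib, ← sum_add_distrib]
    refine sum_congr rfl fun i _ => ?_
    rw [norm_sub_sq_real, real_inner_smul_left]
    ring
  rw [hexpand, norm_sub_sq_real, real_inner_smul_right, norm_smul, Real.norm_eq_abs, mul_pow,
    sq_abs, real_inner_comm]
  field_simp
  ring

end ParallelAxis

section KMeans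

variable {n k d : ℕ} (x : Fin n → EuclideanSpace ℝ (Fin d)) {Γ : Matrix (Fin n) (Fin k) ℝ}

def kmeansCentroid (x : Fin n → EuclideanSpace ℝ (Fin d)) (Γ : Matrix (Fin n) (Fin k) ℝ)
    (j : Fin k) : EuclideanSpace ℝ (Fin d) :=
  (∑ i, Γ i j)⁻¹ • ∑ i, Γ i j • x i

lemma kmeansG_eq_sum (hrow : ∀ i, ∑ j, Γ i j = 1) :
    kmeansG x Γ = ∑ j, (∑ i, Γ i j * ‖x i‖ ^ 2 - ‖∑ i, Γ i j • x i‖ ^ 2 / ∑ i, Γ i j) := by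
  rw [kmeansG, sum_sub_distrib, sum_comm]
  simp [← sum_mul, hrow]

lemma assignmentCost_norm_sub_sq (μ : Fin k → EuclideanSpace ℝ (Fin d)) :
    assignmentCost (Matrix.of fun i j => ‖x i - μ j‖ ^ 2) Γ =
      ∑ j, ∑ i, Γ i j * ‖x i - μ j‖ ^ 2 := by
  rw [assignmentCost_apply, sum_comm]
  rfl

lemma kmeansG_le_assignmentCost (hrow : ∀ i, ∑ j, Γ i j = 1) (hcol : ∀ j, 0 < ∑ i, Γ i j)
    (μ : Fin k → EuclideanSpace ℝ (Fin d)) :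
    kmeansG x Γ ≤ assignmentCost (Matrix.of fun i j => ‖x i - μ j‖ ^ 2) Γ := by
  rw [kmeansG_eq_sum x hrow, assignmentCost_norm_sub_sq]
  refine sum_le_sum fun j _ => ?_
  rw [sum_mul_norm_sub_sq_eq _ _ (hcol j).ne']
  exact le_add_of_nonneg_right (mul_nonneg (hcol j).le (sq_nonneg _))

lemma assignmentCost_kmeansCentroid (hrow : ∀ i, ∑ j, Γ i j = 1) (hcol : ∀ j, ∑ i, Γ i j ≠ 0) :
    assignmentCost (Matrix.of fun i j => ‖x i - kmeansCentroid x Γ j‖ ^ 2) Γ = kmeansG x Γ := by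
  rw [kmeansG_eq_sum x hrow, assignmentCost_norm_sub_sq]
  refine sum_congr rfl fun j _ => ?_
  rw [sum_mul_norm_sub_sq_eq _ _ (hcol j), kmeansCentroid, sub_self, norm_zero]
  simp

theorem exists_mem_kmeansA_kmeansG_le (hΓ : Γ ∈ kmeansAbar n k) :
    ∃ Γ' ∈ kmeansA n k, kmeansG x Γ' ≤ kmeansG x Γ := by
  obtain ⟨Γ', hΓ', hcost⟩ := exists_mem_kmeansA_assignmentCost_le
    (Matrix.of fun i j => ‖x i - kmeansCentroid x Γ j‖ ^ 2) hΓ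
  refine ⟨Γ', hΓ', ?_⟩
  calc kmeansG x Γ'
      ≤ assignmentCost (Matrix.of fun i j => ‖x i - kmeansCentroid x Γ j‖ ^ 2) Γ' :=
        kmeansG_le_assignmentCost x hΓ'.2.1 (fun j => one_pos.trans_le (hΓ'.2.2 j)) _
    _ ≤ assignmentCost (Matrix.of fun i j => ‖x i - kmeansCentroid x Γ j‖ ^ 2) Γ := hcost
    _ = kmeansG x Γ :=
        assignmentCost_kmeansCentroid x hΓ.2.1 fun j => (one_pos.trans_le (hΓ.2.2 j)).ne'

end KMeans

lemma kmeansA_subset_kmeansAbar {n k : ℕ} : kmeansA n k ⊆ kmeansAbar n k := by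
  rintro Γ ⟨h01, hrow, hcol⟩
  refine ⟨fun i j => ?_, hrow, hcol⟩
  rcases h01 i j with h | h <;> simp [h]

lemma kmeansA_finite (n k : ℕ) : (kmeansA n k).Finite := by
  refine (Set.Finite.pi fun _ => Set.Finite.pi fun _ => (Set.toFinite {(0 : ℝ), 1})).subset ?_
  rintro Γ ⟨h01, -, -⟩ i - j -
  exact h01 i j

lemma uniform_mem_kmeansAbar {n k : ℕ} (hk : 1 ≤ k) (hkn : k ≤ n) :
    Matrix.of (fun _ _ => (k : ℝ)⁻¹) ∈ kmeansAbar n k := by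
  have hk' : (1 : ℝ) ≤ k := by exact_mod_cast hk
  have hkn' : (k : ℝ) ≤ n := by exact_mod_cast hkn
  refine ⟨fun _ _ => ⟨inv_nonneg.mpr k.cast_nonneg, inv_le_one_of_one_le₀ hk'⟩,
    fun _ => ?_, fun _ => ?_⟩
  · simp [(one_pos.trans_le hk').ne']
  · simpa [← div_eq_mul_inv] using (one_le_div (one_pos.trans_le hk')).mpr hkn'

lemma kmeansA_nonempty {n k : ℕ} (hk : 1 ≤ k) (hkn : k ≤ n) : (kmeansA n k).Nonempty := by
  obtain ⟨Γ, hΓ, -⟩ := exists_mem_kmeansA_assignmentCost_le 0 (uniform_mem_kmeansAbar hk hkn)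
  exact ⟨Γ, hΓ⟩

/-- The k-means problem over binary assignment matrices is equivalent to its convex
relaxation: the minimum of `G` over `Ā` is attained, there is a minimizer lying in the
binary set `A`, and the minimum values over `Ā` and `A` coincide. -/
theorem kmeans_relaxation_equivalence (n k d : ℕ) (hk : 1 ≤ k) (hkn : k ≤ n)
    (x : Fin n → EuclideanSpace ℝ (Fin d)) :
    ∃ Γstar ∈ kmeansA n k,
      IsLeast (kmeansG x '' kmeansAbar n k) (kmeansG x Γstar) ∧
      IsLeast (kmeansG x '' kmeansA n k) (kmeansG x Γstar) ∧
      sInf (kmeansG x '' kmeansAbar n k) = sInf (kmeansG x '' kmeansA n k) := by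
  obtain ⟨Γstar, hΓstar, hmin⟩ :=
    Set.exists_min_image _ (kmeansG x) (kmeansA_finite n k) (kmeansA_nonempty hk hkn)
  have hA : IsLeast (kmeansG x '' kmeansA n k) (kmeansG x Γstar) :=
    ⟨Set.mem_image_of_mem _ hΓstar, Set.forall_mem_image.mpr hmin⟩
  have hAbar : IsLeast (kmeansG x '' kmeansAbar n k) (kmeansG x Γstar) := by
    refine ⟨Set.mem_image_of_mem _ (kmeansA_subset_kmeansAbar hΓstar),
      Set.forall_mem_image.mpr fun Γ hΓ => ?_⟩
    obtain ⟨Γ', hΓ', hle⟩ := exists_mem_kmeansA_kmeansG_le x hΓ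
    exact (hmin Γ' hΓ').trans hle
  exact ⟨Γstar, hΓstar, hAbar, hA, hAbar.csInf_eq.trans hA.csInf_eq.symm⟩
end
end

section
/- The k-means objective in centroid form equals the concave assignment objective: the infimum over all centroid tuples (y₁,…,y_k) ∈ (ℝ^d)^k of Σ_{i=1}^n min_{j∈{1,…,k}} ‖xᵢ − yⱼ‖² equals the minimum over binary assignment matrices Γ ∈ A of G(Γ), and both are attained. -/
open Finset

noncomputable section

/-- The k-means objective in centroid form:
`Σᵢ min_{j} ‖xᵢ − yⱼ‖²`. -/
def kmeansCost {n k d : ℕ} (hk : 1 ≤ k) (x : Fin n → EuclideanSpace ℝ (Fin d))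
    (y : Fin k → EuclideanSpace ℝ (Fin d)) : ℝ :=
  ∑ i, (univ.inf' ⟨⟨0, hk⟩, mem_univ _⟩ fun j => ‖x i - y j‖ ^ 2)

section KmeansAux

open RealInnerProductSpace

variable {n d : ℕ} (x : Fin n → EuclideanSpace ℝ (Fin d))

def kmSSE (S : Finset (Fin n)) : ℝ :=
  ∑ i ∈ S, ‖x i‖ ^ 2 - ‖∑ i ∈ S, x i‖ ^ 2 / (S.card : ℝ)

def kmMu (S : Finset (Fin n)) : EuclideanSpace ℝ (Fin d) :=
  ((S.card : ℝ))⁻¹ • ∑ i ∈ S, x i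

lemma expand (S : Finset (Fin n)) (z : EuclideanSpace ℝ (Fin d)) :
    ∑ i ∈ S, ‖x i - z‖ ^ 2
      = (∑ i ∈ S, ‖x i‖ ^ 2) - 2 * ⟪∑ i ∈ S, x i, z⟫ + (S.card : ℝ) * ‖z‖ ^ 2 := by
  have h : ∀ i ∈ S, ‖x i - z‖ ^ 2 = ‖x i‖ ^ 2 - 2 * ⟪x i, z⟫ + ‖z‖ ^ 2 := fun i _ => by
    rw [norm_sub_sq_real]
  rw [Finset.sum_congr rfl h, Finset.sum_add_distrib, Finset.sum_sub_distrib,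
    Finset.sum_const, nsmul_eq_mul, sum_inner, Finset.mul_sum]

lemma expand_mu (S : Finset (Fin n)) (hS : S.Nonempty) (z : EuclideanSpace ℝ (Fin d)) :
    ∑ i ∈ S, ‖x i - z‖ ^ 2 = kmSSE x S + (S.card : ℝ) * ‖kmMu x S - z‖ ^ 2 := by
  have hc : (S.card : ℝ) ≠ 0 := by
    exact_mod_cast Finset.card_ne_zero_of_mem hS.choose_spec
  rw [expand, kmSSE, kmMu, norm_sub_sq_real, norm_smul, real_inner_smul_left]
  simp only [Real.norm_eq_abs]
  rw [mul_pow, sq_abs]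
  field_simp
  ring

lemma kmSSE_empty : kmSSE x (∅ : Finset (Fin n)) = 0 := by simp [kmSSE]

lemma kmSSE_le_sum (S : Finset (Fin n)) (z : EuclideanSpace ℝ (Fin d)) :
    kmSSE x S ≤ ∑ i ∈ S, ‖x i - z‖ ^ 2 := by
  rcases S.eq_empty_or_nonempty with rfl | hS
  · simp [kmSSE_empty]
  · rw [expand_mu x S hS z]
    nlinarith [sq_nonneg ‖kmMu x S - z‖, Nat.cast_nonneg (α := ℝ) S.card]

lemma kmSSE_eq_sum (S : Finset (Fin n)) (hS : S.Nonempty) :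
    kmSSE x S = ∑ i ∈ S, ‖x i - kmMu x S‖ ^ 2 := by
  rw [expand_mu x S hS]; simp

lemma kmSSE_nonneg (S : Finset (Fin n)) : 0 ≤ kmSSE x S := by
  rcases S.eq_empty_or_nonempty with rfl | hS
  · simp [kmSSE_empty]
  · rw [kmSSE_eq_sum x S hS]
    exact Finset.sum_nonneg fun i _ => sq_nonneg _

lemma kmSSE_singleton (i : Fin n) : kmSSE x {i} = 0 := by
  simp [kmSSE]

lemma kmSSE_erase_le (S : Finset (Fin n)) (i : Fin n) :
    kmSSE x (S.erase i) ≤ kmSSE x S := by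
  rcases S.eq_empty_or_nonempty with rfl | hS
  · simp
  calc kmSSE x (S.erase i) ≤ ∑ j ∈ S.erase i, ‖x j - kmMu x S‖ ^ 2 := kmSSE_le_sum ..
    _ ≤ ∑ j ∈ S, ‖x j - kmMu x S‖ ^ 2 :=
        Finset.sum_le_sum_of_subset_of_nonneg (Finset.erase_subset _ _)
          (fun j _ _ => sq_nonneg _)
    _ = kmSSE x S := (kmSSE_eq_sum x S hS).symm

variable {k : ℕ}

def kmGamma (g : Fin n → Fin k) : Matrix (Fin n) (Fin k) ℝ :=
  fun i j => if g i = j then 1 else 0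

def kmFiber (g : Fin n → Fin k) (j : Fin k) : Finset (Fin n) :=
  univ.filter (fun i => g i = j)

lemma kmGamma_col_sum (g : Fin n → Fin k) (j : Fin k) :
    ∑ i, kmGamma g i j = ((kmFiber g j).card : ℝ) := by
  simp [kmGamma, kmFiber, Finset.sum_ite_eq]

lemma kmGamma_col_smul (g : Fin n → Fin k) (j : Fin k) :
    ∑ i, kmGamma g i j • x i = ∑ i ∈ kmFiber g j, x i := by
  rw [kmFiber, Finset.sum_filter]
  simp [kmGamma, ite_smul]

lemma kmG_eq (g : Fin n → Fin k) :
    kmeansG x (kmGamma g) = ∑ j, kmSSE x (kmFiber g j) := by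
  unfold kmeansG kmSSE
  rw [Finset.sum_sub_distrib]
  congr 1
  · rw [← Finset.sum_fiberwise univ g (fun i => ‖x i‖ ^ 2)]
    rfl
  · exact Finset.sum_congr rfl fun j _ => by rw [kmGamma_col_smul, kmGamma_col_sum]

lemma kmGamma_mem (g : Fin n → Fin k) (hg : Function.Surjective g) :
    kmGamma g ∈ kmeansA n k := by
  refine ⟨fun i j => by unfold kmGamma; split <;> simp, fun i => by simp [kmGamma], fun j => ?_⟩
  rw [kmGamma_col_sum]
  have : (kmFiber g j).Nonempty := by
    obtain ⟨i, hi⟩ := hg j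
    exact ⟨i, by simp [kmFiber, hi]⟩
  exact_mod_cast Finset.card_pos.2 this

lemma kmA_exists_g {Γ : Matrix (Fin n) (Fin k) ℝ} (hΓ : Γ ∈ kmeansA n k) :
    ∃ g : Fin n → Fin k, Γ = kmGamma g := by
  obtain ⟨h01, hrow, hcol⟩ := hΓ
  have hex : ∀ i, ∃ j, Γ i j = 1 := by
    intro i
    by_contra h
    push_neg at h
    have : ∀ j, Γ i j = 0 := fun j => (h01 i j).resolve_right (h j)
    have h0 := hrow i
    rw [Finset.sum_congr rfl (fun j _ => this j)] at h0
    simp at h0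
  choose g hg using hex
  refine ⟨g, ?_⟩
  funext i j
  unfold kmGamma
  split
  · next h => rw [← h, hg]
  · next h =>
    by_contra h0
    have h1 : Γ i j = 1 := (h01 i j).resolve_left h0
    have hle : Γ i (g i) + Γ i j ≤ ∑ j', Γ i j' := by
      rw [← Finset.sum_pair (by simpa [eq_comm] using h : g i ≠ j)]
      exact Finset.sum_le_sum_of_subset_of_nonneg (Finset.subset_univ _)
        (fun j' _ _ => by rcases h01 i j' with h' | h' <;> simp [h'])
    rw [hg, h1, hrow] at hle
    norm_num at hle

lemma kmH_le_cost (g : Fin n → Fin k) (y : Fin k → EuclideanSpace ℝ (Fin d)) :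
    ∑ j, kmSSE x (kmFiber g j) ≤ ∑ i, ‖x i - y (g i)‖ ^ 2 := by
  rw [← Finset.sum_fiberwise univ g (fun i => ‖x i - y (g i)‖ ^ 2)]
  refine Finset.sum_le_sum fun j _ => ?_
  refine le_trans (kmSSE_le_sum x _ (y j)) (le_of_eq ?_)
  exact Finset.sum_congr rfl fun i hi => by
    rw [(Finset.mem_filter.1 hi).2]

lemma km_exists_opt (hk : 1 ≤ k) (hkn : k ≤ n) :
    ∃ g : Fin n → Fin k, Function.Surjective g ∧
      ∀ g' : Fin n → Fin k, ∑ j, kmSSE x (kmFiber g j) ≤ ∑ j, kmSSE x (kmFiber g' j) := by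
  haveI : Nonempty (Fin k) := ⟨⟨0, hk⟩⟩
  set H : (Fin n → Fin k) → ℝ := fun g => ∑ j, kmSSE x (kmFiber g j) with hH
  obtain ⟨g₀, -, hg₀⟩ := Finset.exists_min_image (univ : Finset (Fin n → Fin k)) H
    ⟨Classical.arbitrary _, mem_univ _⟩
  set M : Finset (Fin n → Fin k) := univ.filter (fun g => ∀ g', H g ≤ H g') with hM
  have hMne : M.Nonempty := ⟨g₀, by simp [hM]; exact fun g' => hg₀ g' (mem_univ _)⟩
  obtain ⟨g, hgM, hmax⟩ := Finset.exists_max_image M (fun g => (univ.image g).card) hMne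
  have hgmin : ∀ g', H g ≤ H g' := (Finset.mem_filter.1 hgM).2
  refine ⟨g, ?_, hgmin⟩
  by_contra hsurj
  unfold Function.Surjective at hsurj
  push_neg at hsurj
  obtain ⟨j₀, hj₀⟩ := hsurj
  -- find two points in the same fiber
  have hcard : (univ.erase j₀).card < (univ : Finset (Fin n)).card := by
    rw [Finset.card_erase_of_mem (mem_univ _)]
    simp only [Finset.card_univ, Fintype.card_fin]
    omega
  obtain ⟨i₀, -, i₁, -, hne, heq⟩ :=
    Finset.exists_ne_map_eq_of_card_lt_of_maps_to hcard
      (f := g) (fun i _ => Finset.mem_erase.2 ⟨hj₀ i, mem_univ _⟩)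
  set g' : Fin n → Fin k := Function.update g i₀ j₀ with hg'
  have hfib : ∀ j, j ≠ j₀ → kmFiber g' j = (kmFiber g j).erase i₀ := by
    intro j hj
    ext i
    simp only [kmFiber, Finset.mem_filter, Finset.mem_erase, mem_univ, true_and, hg']
    rcases eq_or_ne i i₀ with rfl | hi
    · simp [Function.update_self, hj.symm, Ne.symm hj]
    · simp [Function.update_of_ne hi, hi]
  have hfib0 : kmFiber g' j₀ = {i₀} := by
    ext i
    simp only [kmFiber, Finset.mem_filter, mem_univ, true_and, Finset.mem_singleton, hg']
    rcases eq_or_ne i i₀ with rfl | hi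
    · simp
    · simp [Function.update_of_ne hi, hj₀ i, hi]
  have hle : H g' ≤ H g := by
    refine Finset.sum_le_sum fun j _ => ?_
    rcases eq_or_ne j j₀ with rfl | hj
    · rw [hfib0, kmSSE_singleton]
      exact kmSSE_nonneg x _
    · rw [hfib _ hj]
      exact kmSSE_erase_le x _ _
  have hg'M : g' ∈ M := by
    simp only [hM, Finset.mem_filter, mem_univ, true_and]
    exact fun g'' => le_trans hle (hgmin g'')
  have hsub : insert j₀ (univ.image g) ⊆ univ.image g' := by
    intro j hj
    rcases Finset.mem_insert.1 hj with rfl | hj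
    · exact Finset.mem_image.2 ⟨i₀, mem_univ _, by simp [hg']⟩
    · obtain ⟨i, -, rfl⟩ := Finset.mem_image.1 hj
      rcases eq_or_ne i i₀ with rfl | hi
      · exact Finset.mem_image.2 ⟨i₁, mem_univ _, by
          rw [hg', Function.update_of_ne (Ne.symm hne), heq]⟩
      · exact Finset.mem_image.2 ⟨i, mem_univ _, by rw [hg', Function.update_of_ne hi]⟩
  have hj₀im : j₀ ∉ univ.image g := by
    simp only [Finset.mem_image, not_exists]
    exact fun i => by simp [hj₀ i]
  have : (univ.image g).card + 1 ≤ (univ.image g').card := by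
    rw [← Finset.card_insert_of_notMem hj₀im]
    exact Finset.card_le_card hsub
  have := hmax g' hg'M
  omega

lemma km_cost_ge {n k d : ℕ} (hk : 1 ≤ k) (x : Fin n → EuclideanSpace ℝ (Fin d))
    (y : Fin k → EuclideanSpace ℝ (Fin d)) :
    ∃ f : Fin n → Fin k, kmeansCost hk x y = ∑ i, ‖x i - y (f i)‖ ^ 2 := by
  have h : ∀ i : Fin n, ∃ j : Fin k,
      (univ.inf' ⟨⟨0, hk⟩, mem_univ _⟩ fun j => ‖x i - y j‖ ^ 2) = ‖x i - y j‖ ^ 2 := by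
    intro i
    obtain ⟨j, -, hj⟩ := Finset.exists_mem_eq_inf' (⟨⟨0, hk⟩, mem_univ _⟩ :
      (univ : Finset (Fin k)).Nonempty) (fun j => ‖x i - y j‖ ^ 2)
    exact ⟨j, hj⟩
  choose f hf using h
  exact ⟨f, Finset.sum_congr rfl fun i _ => hf i⟩

end KmeansAux

/-- The k-means objective in centroid form equals the concave assignment objective:
the infimum over all centroid tuples of `Σᵢ minⱼ ‖xᵢ − yⱼ‖²` equals the minimum over
binary assignment matrices `Γ ∈ A` of `G(Γ)`, and both are attained. -/
theorem kmeans_centroid_eq_assignment (n k d : ℕ) (hk : 1 ≤ k) (hkn : k ≤ n)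
    (x : Fin n → EuclideanSpace ℝ (Fin d)) :
    ∃ (y : Fin k → EuclideanSpace ℝ (Fin d)) (Γ : Matrix (Fin n) (Fin k) ℝ),
      Γ ∈ kmeansA n k ∧
      (∀ y' : Fin k → EuclideanSpace ℝ (Fin d), kmeansCost hk x y ≤ kmeansCost hk x y') ∧
      (∀ Γ' ∈ kmeansA n k, kmeansG x Γ ≤ kmeansG x Γ') ∧
      kmeansCost hk x y = kmeansG x Γ := by
  obtain ⟨g, hgsurj, hgmin⟩ := km_exists_opt x hk hkn
  set y : Fin k → EuclideanSpace ℝ (Fin d) := fun j => kmMu x (kmFiber g j) with hy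
  refine ⟨y, kmGamma g, kmGamma_mem g hgsurj, ?_, ?_, ?_⟩
  · -- cost minimality
    intro y'
    obtain ⟨f, hf⟩ := km_cost_ge hk x y'
    have h1 : kmeansCost hk x y ≤ ∑ j, kmSSE x (kmFiber g j) := by
      calc kmeansCost hk x y ≤ ∑ i, ‖x i - y (g i)‖ ^ 2 :=
            Finset.sum_le_sum fun i _ => Finset.inf'_le _ (mem_univ (g i))
        _ = ∑ j, ∑ i ∈ kmFiber g j, ‖x i - y j‖ ^ 2 := by
            rw [← Finset.sum_fiberwise univ g (fun i => ‖x i - y (g i)‖ ^ 2)]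
            exact Finset.sum_congr rfl fun j _ => Finset.sum_congr rfl fun i hi => by
              rw [(Finset.mem_filter.1 hi).2]
        _ = ∑ j, kmSSE x (kmFiber g j) := by
            refine Finset.sum_congr rfl fun j _ => ?_
            obtain ⟨i, hi⟩ := hgsurj j
            exact (kmSSE_eq_sum x _ ⟨i, by simp [kmFiber, hi]⟩).symm
    calc kmeansCost hk x y ≤ ∑ j, kmSSE x (kmFiber g j) := h1
      _ ≤ ∑ j, kmSSE x (kmFiber f j) := hgmin f
      _ ≤ ∑ i, ‖x i - y' (f i)‖ ^ 2 := kmH_le_cost x f y'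
      _ = kmeansCost hk x y' := hf.symm
  · -- G minimality
    intro Γ' hΓ'
    obtain ⟨g', rfl⟩ := kmA_exists_g hΓ'
    rw [kmG_eq, kmG_eq]
    exact hgmin g'
  · -- equality
    rw [kmG_eq]
    refine le_antisymm ?_ ?_
    · calc kmeansCost hk x y ≤ ∑ i, ‖x i - y (g i)‖ ^ 2 :=
            Finset.sum_le_sum fun i _ => Finset.inf'_le _ (mem_univ (g i))
        _ = ∑ j, ∑ i ∈ kmFiber g j, ‖x i - y j‖ ^ 2 := by
            rw [← Finset.sum_fiberwise univ g (fun i => ‖x i - y (g i)‖ ^ 2)]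
            exact Finset.sum_congr rfl fun j _ => Finset.sum_congr rfl fun i hi => by
              rw [(Finset.mem_filter.1 hi).2]
        _ = ∑ j, kmSSE x (kmFiber g j) := by
            refine Finset.sum_congr rfl fun j _ => ?_
            obtain ⟨i, hi⟩ := hgsurj j
            exact (kmSSE_eq_sum x _ ⟨i, by simp [kmFiber, hi]⟩).symm
    · obtain ⟨f, hf⟩ := km_cost_ge hk x y
      calc ∑ j, kmSSE x (kmFiber g j) ≤ ∑ j, kmSSE x (kmFiber f j) := hgmin f
        _ ≤ ∑ i, ‖x i - y (f i)‖ ^ 2 := kmH_le_cost x f y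
        _ = kmeansCost hk x y := hf.symm
end
end

section
/- Concavity of the reduced k-means objective: the function Γ ↦ Σ_{j=1}^k ‖Σᵢ Γᵢⱼ xᵢ‖² / (Σᵢ Γᵢⱼ) is convex on the convex set of real n×k matrices all of whose column sums are positive; equivalently, G(Γ) = c₀ − Σⱼ ‖Σᵢ Γᵢⱼ xᵢ‖²/(Σᵢ Γᵢⱼ) is concave on this set. -/
open Finset

noncomputable section

/-! Each summand is the perspective `(v, s) ↦ ‖v‖² / s` of the squared norm, evaluated at the
column moments `(Σᵢ Γᵢⱼ xᵢ, Σᵢ Γᵢⱼ)`, which depend linearly on `Γ`. The perspective is jointly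
convex on `E × (0, ∞)` because of the identity
`(a s + b t) (a ‖u‖²/s + b ‖v‖²/t) - ‖a u + b v‖² = a b / (s t) · ‖t u - s v‖²`. -/

theorem ConvexOn.finset_sum {𝕜 E β ι : Type*} [Semiring 𝕜] [PartialOrder 𝕜] [AddCommMonoid E]
    [SMul 𝕜 E] [AddCommMonoid β] [PartialOrder β] [IsOrderedAddMonoid β] [Module 𝕜 β]
    {s : Set E} {f : ι → E → β} (t : Finset ι) (hs : Convex 𝕜 s)
    (hf : ∀ i ∈ t, ConvexOn 𝕜 s (f i)) : ConvexOn 𝕜 s fun x => ∑ i ∈ t, f i x := by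
  classical
  induction t using Finset.induction_on with
  | empty => simpa using convexOn_const (0 : β) hs
  | insert a t ha ih =>
    simp_rw [sum_insert ha]
    exact (hf a (mem_insert_self a t)).add (ih fun i hi => hf i (mem_insert_of_mem hi))

section Perspective

variable {E : Type*} [NormedAddCommGroup E] [InnerProductSpace ℝ E]

theorem perspective_norm_sq_gap (u v : E) {s t : ℝ} (hs : s ≠ 0) (ht : t ≠ 0) (a b : ℝ) :
    (a * s + b * t) * (a * (‖u‖ ^ 2 / s) + b * (‖v‖ ^ 2 / t)) - ‖a • u + b • v‖ ^ 2 =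
      a * b / (s * t) * ‖t • u - s • v‖ ^ 2 := by
  rw [norm_add_sq_real, norm_sub_sq_real]
  simp only [norm_smul, real_inner_smul_left, real_inner_smul_right, mul_pow,
    Real.norm_eq_abs, sq_abs]
  field_simp
  ring

theorem convexOn_norm_sq_div :
    ConvexOn ℝ (Set.univ ×ˢ Set.Ioi 0) fun p : E × ℝ => ‖p.1‖ ^ 2 / p.2 := by
  refine convexOn_iff_forall_pos.2 ⟨convex_univ.prod (convex_Ioi 0), ?_⟩
  rintro ⟨u, s⟩ ⟨-, hs : 0 < s⟩ ⟨v, t⟩ ⟨-, ht : 0 < t⟩ a b ha hb -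
  have hmass : 0 < a * s + b * t := by positivity
  have hgap := perspective_norm_sq_gap u v hs.ne' ht.ne' a b
  have : 0 ≤ a * b / (s * t) * ‖t • u - s • v‖ ^ 2 := by positivity
  simp only [Prod.fst_add, Prod.snd_add, Prod.smul_fst, Prod.smul_snd, smul_eq_mul]
  rw [div_le_iff₀ hmass]
  linarith

end Perspective

variable {ι κ E : Type*} [Fintype ι] [NormedAddCommGroup E] [InnerProductSpace ℝ E]

def columnMoments (x : ι → E) (j : κ) : Matrix ι κ ℝ →ₗ[ℝ] E × ℝ where
  toFun Γ := (∑ i, Γ i j • x i, ∑ i, Γ i j)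
  map_add' Γ Δ := by simp [add_smul, sum_add_distrib]
  map_smul' c Γ := by simp [smul_sum, mul_smul, mul_sum]

theorem setOf_forall_sum_pos_eq_iInter (x : ι → E) :
    {Γ : Matrix ι κ ℝ | ∀ j, 0 < ∑ i, Γ i j} =
      ⋂ j, columnMoments x j ⁻¹' (Set.univ ×ˢ Set.Ioi 0) := by
  ext Γ
  simp [columnMoments]

theorem convexOn_norm_sq_column_div_sum (x : ι → E) (j : κ) :
    ConvexOn ℝ (columnMoments x j ⁻¹' (Set.univ ×ˢ Set.Ioi 0))
      fun Γ => ‖∑ i, Γ i j • x i‖ ^ 2 / ∑ i, Γ i j :=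
  convexOn_norm_sq_div.comp_linearMap (columnMoments x j)

/-- Concavity of the reduced k-means objective: the map
`Γ ↦ Σⱼ ‖Σᵢ Γᵢⱼ xᵢ‖² / (Σᵢ Γᵢⱼ)` is convex on the convex set of real `n×k` matrices with
positive column sums; equivalently `G(Γ) = c₀ − Σⱼ ‖Σᵢ Γᵢⱼ xᵢ‖²/(Σᵢ Γᵢⱼ)` is concave
there. -/
theorem kmeans_objective_concave (n k d : ℕ) (x : Fin n → EuclideanSpace ℝ (Fin d)) :
    Convex ℝ {Γ : Matrix (Fin n) (Fin k) ℝ | ∀ j, 0 < ∑ i, Γ i j} ∧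
    ConvexOn ℝ {Γ : Matrix (Fin n) (Fin k) ℝ | ∀ j, 0 < ∑ i, Γ i j}
      (fun Γ => ∑ j, ‖∑ i, Γ i j • x i‖ ^ 2 / (∑ i, Γ i j)) ∧
    ConcaveOn ℝ {Γ : Matrix (Fin n) (Fin k) ℝ | ∀ j, 0 < ∑ i, Γ i j}
      (fun Γ => (∑ i, ‖x i‖ ^ 2) - ∑ j, ‖∑ i, Γ i j • x i‖ ^ 2 / (∑ i, Γ i j)) := by
  have hdom := setOf_forall_sum_pos_eq_iInter (κ := Fin k) x
  have hconv : Convex ℝ {Γ : Matrix (Fin n) (Fin k) ℝ | ∀ j, 0 < ∑ i, Γ i j} := by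
    rw [hdom]
    exact convex_iInter fun j => (convex_univ.prod (convex_Ioi 0)).linear_preimage _
  have hcvx : ConvexOn ℝ {Γ : Matrix (Fin n) (Fin k) ℝ | ∀ j, 0 < ∑ i, Γ i j}
      (fun Γ => ∑ j, ‖∑ i, Γ i j • x i‖ ^ 2 / (∑ i, Γ i j)) :=
    ConvexOn.finset_sum univ hconv fun j _ =>
      (convexOn_norm_sq_column_div_sum x j).subset
        (hdom ▸ Set.iInter_subset _ j) hconv
  exact ⟨hconv, hcvx, (concaveOn_const _ hconv).sub hcvx⟩
end
end

section
/- Distance lower bound from the cut: let F : ℝ^m → ℝ be concave and differentiable at z_N, let ẑ ∈ ℝ^m with ε := F(ẑ) − F(z_N) > 0, and let z ∈ ℝ^m satisfy the cut constraint ⟨∇F(z_N), z − ẑ⟩ ≥ 0. Then ∇F(z_N) ≠ 0 and ‖z − z_N‖ ≥ ε / ‖∇F(z_N)‖. -/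
open scoped RealInnerProductSpace

noncomputable section

/-- The key gradient inequality for concave functions. -/
lemma concave_gradient_ineq (m : ℕ) (F : EuclideanSpace ℝ (Fin m) → ℝ)
    (hF : ConcaveOn ℝ Set.univ F)
    (zN : EuclideanSpace ℝ (Fin m)) (hdiff : DifferentiableAt ℝ F zN)
    (zhat : EuclideanSpace ℝ (Fin m)) :
    F zhat - F zN ≤ ⟪gradient F zN, zhat - zN⟫ := by
  set v := zhat - zN with hv
  have hfd : fderiv ℝ F zN v = ⟪gradient F zN, v⟫ := by
    simp [gradient, InnerProductSpace.toDual_symm_apply]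
  -- the curve t ↦ zN + t • v
  have hcurve : HasDerivAt (fun t : ℝ => zN + t • v) v 0 := by
    simpa using ((hasDerivAt_id (0:ℝ)).smul_const v).const_add zN
  have hF0 : HasFDerivAt F (fderiv ℝ F zN) (zN + (0:ℝ) • v) := by
    simpa using hdiff.hasFDerivAt
  have hg : HasDerivAt (fun t : ℝ => F (zN + t • v)) (fderiv ℝ F zN v) 0 :=
    hF0.comp_hasDerivAt 0 hcurve
  have hslope : Filter.Tendsto (slope (fun t : ℝ => F (zN + t • v)) 0)
      (nhdsWithin 0 {(0:ℝ)}ᶜ) (nhds (fderiv ℝ F zN v)) :=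
    hasDerivAt_iff_tendsto_slope.mp hg
  have hslope' : Filter.Tendsto (slope (fun t : ℝ => F (zN + t • v)) 0)
      (nhdsWithin 0 (Set.Ioi 0)) (nhds (fderiv ℝ F zN v)) :=
    hslope.mono_left (nhdsWithin_mono 0 (fun x hx => ne_of_gt hx))
  have hev : ∀ᶠ t in nhdsWithin (0:ℝ) (Set.Ioi 0),
      F zhat - F zN ≤ slope (fun t : ℝ => F (zN + t • v)) 0 t := by
    filter_upwards [Ioo_mem_nhdsGT_of_mem (by norm_num : (0:ℝ) ∈ Set.Ico 0 1)] with t ht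
    obtain ⟨ht0, ht1⟩ := ht
    have hcomb : (1 - t) • F zN + t • F zhat ≤ F ((1 - t) • zN + t • zhat) :=
      hF.2 (Set.mem_univ zN) (Set.mem_univ zhat) (by linarith) (le_of_lt ht0) (by ring)
    have heq : zN + t • v = (1 - t) • zN + t • zhat := by
      simp [hv, smul_sub, sub_smul]; abel
    have h0 : zN + (0:ℝ) • v = zN := by simp
    rw [slope_def_field, heq, h0, sub_zero, le_div_iff₀ ht0]
    simp only [smul_eq_mul] at hcomb
    nlinarith
  have := ge_of_tendsto hslope' hev
  linarith [hfd, this]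

/-- Distance lower bound from the cut: if `F : ℝ^m → ℝ` is concave and differentiable at
`z_N`, `ε := F(ẑ) − F(z_N) > 0`, and `z` satisfies the cut `⟨∇F(z_N), z − ẑ⟩ ≥ 0`, then
`∇F(z_N) ≠ 0` and `‖z − z_N‖ ≥ ε / ‖∇F(z_N)‖`. -/
theorem cutting_plane_distance_bound (m : ℕ) (F : EuclideanSpace ℝ (Fin m) → ℝ)
    (hF : ConcaveOn ℝ Set.univ F)
    (zN : EuclideanSpace ℝ (Fin m)) (hdiff : DifferentiableAt ℝ F zN)
    (zhat z : EuclideanSpace ℝ (Fin m))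
    (hε : 0 < F zhat - F zN)
    (hcut : 0 ≤ ⟪gradient F zN, z - zhat⟫) :
    gradient F zN ≠ 0 ∧ (F zhat - F zN) / ‖gradient F zN‖ ≤ ‖z - zN‖ := by
  have key := concave_gradient_ineq m F hF zN hdiff zhat
  have hzz : (F zhat - F zN) ≤ ⟪gradient F zN, z - zN⟫ := by
    have : ⟪gradient F zN, z - zN⟫ = ⟪gradient F zN, z - zhat⟫ + ⟪gradient F zN, zhat - zN⟫ := by
      rw [← inner_add_right]; congr 1; abel
    linarith
  have hgne : gradient F zN ≠ 0 := by
    intro h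
    rw [h] at hzz
    simp at hzz
    linarith
  refine ⟨hgne, ?_⟩
  have hcs : ⟪gradient F zN, z - zN⟫ ≤ ‖gradient F zN‖ * ‖z - zN‖ :=
    real_inner_le_norm _ _
  have hng : 0 < ‖gradient F zN‖ := norm_pos_iff.mpr hgne
  rw [div_le_iff₀ hng]
  calc F zhat - F zN ≤ ‖gradient F zN‖ * ‖z - zN‖ := le_trans hzz hcs
    _ = ‖z - zN‖ * ‖gradient F zN‖ := mul_comm _ _
end
end

section
/- Convergence of the cutting-plane gap (Theorem 1, abstract form): let B ⊆ ℝ^m be a bounded set, let F : ℝ^m → ℝ be concave and differentiable with ‖∇F(z)‖ ≤ M for all z ∈ B, and let (z_N)_{N∈ℕ} and (ẑ_N)_{N∈ℕ} be sequences in B such that for all N and all ℓ ≥ 1 the later iterate satisfies the cut: ⟨∇F(z_N), z_{N+ℓ} − ẑ_N⟩ ≥ 0. Define the gap ε_N = F(ẑ_N) − F(z_N). Then for every ε > 0 there exists N with ε_N < ε; in particular if ε_N ≥ 0 for all N then inf_N ε_N = 0. -/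
/-!
If the gap stayed above some `ε > 0`, the gradient inequality for the concave `F` combined with
the cut `⟪∇F(z_N), z_{N+ℓ} - ẑ_N⟫ ≥ 0` would give `ε ≤ ⟪∇F(z_N), z_{N+ℓ} - z_N⟫ ≤ M ‖z_{N+ℓ} - z_N‖`
for all `ℓ ≥ 1`: the iterates `z_N` would be uniformly separated. A bounded sequence in `ℝ^m`
has a convergent, hence Cauchy, subsequence, so this is impossible.
-/

open scoped RealInnerProductSpace

theorem ConcaveOn.le_add_inner_gradient {E : Type*} [NormedAddCommGroup E]
    [InnerProductSpace ℝ E] [CompleteSpace E] {F : E → ℝ} {s : Set E} (hF : ConcaveOn ℝ s F)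
    {x y : E} (hx : x ∈ s) (hy : y ∈ s) (hd : DifferentiableAt ℝ F x) :
    F y ≤ F x + ⟪gradient F x, y - x⟫ := by
  have hL0 : AffineMap.lineMap x y (0 : ℝ) = x := AffineMap.lineMap_apply_zero x y
  have hL1 : AffineMap.lineMap x y (1 : ℝ) = y := AffineMap.lineMap_apply_one x y
  have hderiv : HasDerivAt (F ∘ AffineMap.lineMap x y) ⟪gradient F x, y - x⟫ (0 : ℝ) := by
    rw [← hL0] at hd
    simpa [hL0] using hd.hasGradientAt.hasFDerivAt.comp_hasDerivAt (0 : ℝ)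
      AffineMap.hasDerivAt_lineMap
  have hslope := (hF.comp_affineMap (AffineMap.lineMap x y)).slope_le_of_hasDerivAt
    (by simpa [hL0]) (by simpa [hL1]) zero_lt_one hderiv
  rw [slope_def_field] at hslope
  simp only [Function.comp_apply, hL0, hL1, sub_zero, div_one] at hslope
  linarith

theorem ConcaveOn.sub_le_norm_gradient_mul_of_inner_nonneg {E : Type*} [NormedAddCommGroup E]
    [InnerProductSpace ℝ E] [CompleteSpace E] {F : E → ℝ} {s : Set E} (hF : ConcaveOn ℝ s F)
    {x y w : E} (hx : x ∈ s) (hy : y ∈ s) (hd : DifferentiableAt ℝ F x)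
    (hcut : 0 ≤ ⟪gradient F x, w - y⟫) :
    F y - F x ≤ ‖gradient F x‖ * ‖w - x‖ :=
  calc F y - F x ≤ ⟪gradient F x, y - x⟫ := by
        linarith [hF.le_add_inner_gradient hx hy hd]
    _ ≤ ⟪gradient F x, w - y⟫ + ⟪gradient F x, y - x⟫ := le_add_of_nonneg_left hcut
    _ = ⟪gradient F x, w - x⟫ := by rw [← inner_add_right, sub_add_sub_cancel]
    _ ≤ ‖gradient F x‖ * ‖w - x‖ := real_inner_le_norm _ _

theorem Bornology.IsBounded.exists_lt_dist_lt {X : Type*} [PseudoMetricSpace X] [ProperSpace X]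
    {B : Set X} (hB : Bornology.IsBounded B) {w : ℕ → X} (hw : ∀ n, w n ∈ B) {δ : ℝ}
    (hδ : 0 < δ) : ∃ i j, i < j ∧ dist (w j) (w i) < δ := by
  obtain ⟨a, -, φ, hφ, hlim⟩ := hB.isCompact_closure.tendsto_subseq fun n => subset_closure (hw n)
  obtain ⟨n, hn⟩ := Metric.cauchySeq_iff'.mp hlim.cauchySeq δ hδ
  exact ⟨φ n, φ (n + 1), hφ n.lt_succ_self, hn _ n.le_succ⟩

theorem cutting_plane_gap_convergence_general (m : ℕ) (B : Set (EuclideanSpace ℝ (Fin m)))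
    (hB : Bornology.IsBounded B)
    (F : EuclideanSpace ℝ (Fin m) → ℝ)
    (hF : ConcaveOn ℝ Set.univ F) (hdiff : Differentiable ℝ F)
    (M : ℝ) (hM : ∀ z ∈ B, ‖gradient F z‖ ≤ M)
    (z zhat : ℕ → EuclideanSpace ℝ (Fin m))
    (hzB : ∀ N, z N ∈ B)
    (hcut : ∀ N ℓ, 1 ≤ ℓ → 0 ≤ ⟪gradient F (z N), z (N + ℓ) - zhat N⟫) :
    (∀ ε > 0, ∃ N, F (zhat N) - F (z N) < ε) ∧
    ((∀ N, 0 ≤ F (zhat N) - F (z N)) → (⨅ N, (F (zhat N) - F (z N))) = 0) := by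
  have hgap : ∀ ε > 0, ∃ N, F (zhat N) - F (z N) < ε := by
    intro ε hε
    obtain ⟨i, j, hij, hdist⟩ := hB.exists_lt_dist_lt hzB (by positivity : 0 < ε / (|M| + 1))
    have hcut_ij := hcut i (j - i) (by omega)
    rw [Nat.add_sub_cancel' hij.le] at hcut_ij
    refine ⟨i, ?_⟩
    calc F (zhat i) - F (z i) ≤ ‖gradient F (z i)‖ * ‖z j - z i‖ :=
          hF.sub_le_norm_gradient_mul_of_inner_nonneg trivial trivial (hdiff _) hcut_ij
      _ ≤ (|M| + 1) * dist (z j) (z i) := by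
          rw [dist_eq_norm]
          gcongr
          linarith [hM _ (hzB i), le_abs_self M]
      _ < ε := by rwa [lt_div_iff₀' (by positivity)] at hdist
  exact ⟨hgap, fun hnonneg => ciInf_eq_of_forall_ge_of_forall_gt_exists_lt hnonneg hgap⟩

/-- Convergence of the cutting-plane gap (Theorem 1, abstract form): for a bounded set
`B ⊆ ℝ^m`, a concave differentiable `F` with gradient norm bounded by `M` on `B`, and
sequences `(z_N)`, `(ẑ_N)` in `B` such that every later iterate satisfies the cut
`⟨∇F(z_N), z_{N+ℓ} − ẑ_N⟩ ≥ 0`, the gap `ε_N = F(ẑ_N) − F(z_N)` drops below every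
`ε > 0`; in particular if `ε_N ≥ 0` for all `N`, then `inf_N ε_N = 0`. -/
theorem cutting_plane_gap_convergence (m : ℕ) (B : Set (EuclideanSpace ℝ (Fin m)))
    (hB : Bornology.IsBounded B)
    (F : EuclideanSpace ℝ (Fin m) → ℝ)
    (hF : ConcaveOn ℝ Set.univ F) (hdiff : Differentiable ℝ F)
    (M : ℝ) (hM : ∀ z ∈ B, ‖gradient F z‖ ≤ M)
    (z zhat : ℕ → EuclideanSpace ℝ (Fin m))
    (hzB : ∀ N, z N ∈ B) (hzhatB : ∀ N, zhat N ∈ B)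
    (hcut : ∀ N ℓ, 1 ≤ ℓ → 0 ≤ ⟪gradient F (z N), z (N + ℓ) - zhat N⟫) :
    (∀ ε > 0, ∃ N, F (zhat N) - F (z N) < ε) ∧
    ((∀ N, 0 ≤ F (zhat N) - F (z N)) → (⨅ N, (F (zhat N) - F (z N))) = 0) :=
  cutting_plane_gap_convergence_general m B hB F hF hdiff M hM z zhat hzB hcut
end

section
/- Convergence of the least-squares cutting-plane scheme: let K ⊆ ℝ^m be a nonempty closed convex set, let B ⊆ ℝ^m be a bounded set, and let (z_N)_{N∈ℕ} be a sequence in B. For each N let ẑ_N be the metric projection of z_N onto K, and suppose every later iterate satisfies the least-squares cut: ⟨z_N − ẑ_N, z_{N+ℓ} − ẑ_N⟩ ≤ 0 for all ℓ ≥ 1. Then ‖z_{N+ℓ} − z_N‖ ≥ ‖z_N − ẑ_N‖ for all N and ℓ ≥ 1, and consequently inf_N ‖z_N − ẑ_N‖ = 0, i.e., inf_N dist(z_N, K) = 0. -/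
open scoped RealInnerProductSpace

noncomputable section

/-- Convergence of the least-squares cutting-plane scheme: let `K ⊆ ℝ^m` be a nonempty
closed convex set, `B` a bounded set and `(z_N)` a sequence in `B`. If `ẑ_N` is the
metric projection of `z_N` onto `K` and every later iterate satisfies the least-squares
cut `⟨z_N − ẑ_N, z_{N+ℓ} − ẑ_N⟩ ≤ 0`, then `‖z_{N+ℓ} − z_N‖ ≥ ‖z_N − ẑ_N‖` for all `N`
and `ℓ ≥ 1`, and consequently `inf_N ‖z_N − ẑ_N‖ = 0`, i.e. `inf_N dist(z_N, K) = 0`. -/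
theorem least_squares_cut_convergence (m : ℕ) (K : Set (EuclideanSpace ℝ (Fin m)))
    (hKne : K.Nonempty) (hKclosed : IsClosed K) (hKconv : Convex ℝ K)
    (B : Set (EuclideanSpace ℝ (Fin m))) (hB : Bornology.IsBounded B)
    (z zhat : ℕ → EuclideanSpace ℝ (Fin m)) (hzB : ∀ N, z N ∈ B)
    (hproj : ∀ N, zhat N ∈ K ∧ ∀ w ∈ K, ‖z N - zhat N‖ ≤ ‖z N - w‖)
    (hcut : ∀ N ℓ, 1 ≤ ℓ → ⟪z N - zhat N, z (N + ℓ) - zhat N⟫ ≤ 0) :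
    (∀ N ℓ, 1 ≤ ℓ → ‖z N - zhat N‖ ≤ ‖z (N + ℓ) - z N‖) ∧
    (⨅ N, ‖z N - zhat N‖) = 0 ∧
    (⨅ N, Metric.infDist (z N) K) = 0 := by
  -- Part 1
  have key : ∀ N ℓ, 1 ≤ ℓ → ‖z N - zhat N‖ ≤ ‖z (N + ℓ) - z N‖ := by
    intro N ℓ hℓ
    have hc := hcut N ℓ hℓ
    set d := z N - zhat N with hd
    set v := z (N + ℓ) - zhat N with hv
    have hvd : z (N + ℓ) - z N = v - d := by rw [hv, hd]; abel
    rw [hvd]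
    have hsq : ‖d‖ ^ 2 ≤ ‖v - d‖ ^ 2 := by
      have := @norm_sub_sq_real (EuclideanSpace ℝ (Fin m)) _ _ v d
      have hsym : ⟪v, d⟫ = ⟪d, v⟫ := real_inner_comm d v
      nlinarith [sq_nonneg ‖v‖]
    nlinarith [norm_nonneg d, norm_nonneg (v - d)]
  have hinf : (⨅ N, ‖z N - zhat N‖) = 0 := by
    have hbdd : BddBelow (Set.range fun N => ‖z N - zhat N‖) := by
      refine ⟨0, ?_⟩
      rintro x ⟨N, rfl⟩
      exact norm_nonneg _
    have hge : 0 ≤ ⨅ N, ‖z N - zhat N‖ :=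
      le_ciInf fun N => norm_nonneg _
    by_contra hne
    have hpos : 0 < ⨅ N, ‖z N - zhat N‖ := lt_of_le_of_ne hge (Ne.symm hne)
    set c := ⨅ N, ‖z N - zhat N‖ with hc
    have hlow : ∀ N, c ≤ ‖z N - zhat N‖ := fun N => ciInf_le hbdd N
    -- compactness: extract a convergent subsequence
    obtain ⟨a, -, φ, hmono, htend⟩ :=
      hB.isCompact_closure.tendsto_subseq (fun n => subset_closure (hzB n))
    have hcauchy : CauchySeq (fun n => z (φ n)) := htend.cauchySeq
    obtain ⟨N, hN⟩ := Metric.cauchySeq_iff'.mp hcauchy c hpos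
    have h1 : φ N < φ (N + 1) := hmono (Nat.lt_succ_self N)
    have hφ : φ (N + 1) = φ N + (φ (N + 1) - φ N) := by omega
    have hℓ : 1 ≤ φ (N + 1) - φ N := by omega
    have := key (φ N) (φ (N + 1) - φ N) hℓ
    rw [← hφ] at this
    have hd : dist (z (φ (N + 1))) (z (φ N)) < c := hN (N + 1) (Nat.le_succ N)
    rw [dist_eq_norm] at hd
    have := lt_of_le_of_lt (le_trans (hlow (φ N)) this) hd
    exact lt_irrefl c this
  refine ⟨key, hinf, ?_⟩
  · have heq : ∀ N, Metric.infDist (z N) K = ‖z N - zhat N‖ := by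
      intro N
      obtain ⟨hmem, hmin⟩ := hproj N
      refine le_antisymm ?_ ?_
      · have := Metric.infDist_le_dist_of_mem (x := z N) hmem
        rwa [dist_eq_norm] at this
      · by_contra h
        push_neg at h
        obtain ⟨w, hw, hlt⟩ := (Metric.infDist_lt_iff hKne).mp h
        rw [dist_eq_norm] at hlt
        exact absurd (hmin w hw) (not_le.mpr hlt)
    rw [show (⨅ N, Metric.infDist (z N) K) = ⨅ N, ‖z N - zhat N‖ from
      iInf_congr heq]
    exact hinf
end
end
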